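/- arXiv:1607.01197 — 3 statements merged into one kernel-verified Lean document; each statement's English description precedes it below -/
import Mathlib

section
/- Assume the extension E/F is ramified and let π_E be a uniformizer of E. Let L be a lattice in E with l(L) = 0 (equivalently, O_E·L ⊆ L). Then [π_E·L] is adjacent to [L], satisfies l(π_E·L) = 0, and is the unique class adjacent to [L] with l = 0; every other class adjacent to [L] satisfies l = 1. -/
/-!
`F` is a nonarchimedean local field: a field complete with respect to a discrete valuation
(encoded by `Valued F ℤₘ₀` together with `CompleteSpace F` and the requirement that the
valuation ring is a discrete valuation ring) with finite residue field.
`E/F` is a quadratic field extension, with `O_E` the valuation ring of `E`, realized as the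
integral closure of `O_F` in `E`.
-/

open scoped Multiplicative Pointwise

noncomputable section

variable (F : Type*) [Field F] [Valued F (WithZero (Multiplicative ℤ))] [CompleteSpace F]

/-- The valuation ring `O_F` of `F`. -/
noncomputable abbrev OF : ValuationSubring F := (Valued.v : Valuation F (WithZero (Multiplicative ℤ))).valuationSubring

variable (E : Type*) [Field E] [Algebra F E]

/-- A lattice in `E`: a finitely generated `O_F`-submodule of `E` containing an `F`-basis of
`E` (equivalently, spanning `E` as an `F`-vector space). -/
def IsLattice (L : Submodule (OF F) E) : Prop :=
  L.FG ∧ Submodule.span F (L : Set E) = ⊤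

/-- The multiplier ring `O_L = {x ∈ E | x·L ⊆ L}` of an `O_F`-submodule `L` of `E`. -/
def mult (L : Submodule (OF F) E) : Set E := {x : E | ∀ y ∈ L, x * y ∈ L}

/-- The order `O_F + π^m·O_E` of `E`, where `O_E` is the valuation ring (= integral closure
of `O_F`) of `E` and `π` is a uniformizer of `F`. -/
def ordSet (π : OF F) (m : ℕ) : Set E :=
  {x : E | ∃ a : OF F, ∃ b : integralClosure (OF F) E,
    x = algebraMap (OF F) E a + (algebraMap F E (π : F)) ^ m * (b : E)}

/-- Two `O_F`-submodules of `E` are homothetic if they differ by scaling by an element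
of `F^*`. -/
def Homothetic (L L' : Submodule (OF F) E) : Prop :=
  ∃ c : F, c ≠ 0 ∧ (L' : Set E) = c • (L : Set E)

/-- The homothety classes of two lattices `L`, `L'` are adjacent (as vertices of the
Bruhat–Tits tree) if they are distinct and admit representatives `M`, `M'` with
`π·M ⊊ M' ⊊ M`. -/
def Adjacent (π : OF F) (L L' : Submodule (OF F) E) : Prop :=
  ¬ Homothetic F E L L' ∧
    ∃ M M' : Submodule (OF F) E, Homothetic F E L M ∧ Homothetic F E L' M' ∧
      (algebraMap F E (π : F)) • (M : Set E) ⊂ (M' : Set E) ∧ (M' : Set E) ⊂ (M : Set E)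

/-!
Since `O_E ⊆ O_L`, the lattice `L` is a finitely generated `O_E`-submodule of `E`, hence
`L = x·O_E`. Inclusions between such lattices are governed by the normalized additive valuation
`v` of `E`: `x·O_E ⊆ y·O_E` iff `v x ≥ v y`. Ramification gives `v π = 2`, so `v` is even on
`F^*`. A neighbour `y·O_E` of `L`, squeezed between `π·x·O_E` and `x·O_E`, therefore has
`v y = v x + 1`, i.e. it is `π_E·L` up to `F^*`; and `π_E·L` is not homothetic to `L` by parity.
Any neighbour `L''` has representatives `M ∈ [L]`, `M' ∈ [L'']` with `π·M ⊆ M' ⊆ M`, so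
`π·π_E·M' ⊆ π·M ⊆ M'`; but `π·π_E ∉ O_F + π^m·O_E` for `m ≥ 2`, since `v(π·π_E) = 3` is odd
while `v ≥ 4` on `π^m·O_E`. Hence `l(L'') ≤ 1`, with `l(L'') = 0` only for `[π_E·L]`.
-/

open WithZero

lemma Set.smul_set_eq_algebraMap_smul_set {R A : Type*} [CommSemiring R] [Semiring A]
    [Algebra R A] (c : R) (s : Set A) : c • s = algebraMap R A c • s := by
  simp_rw [Algebra.algebraMap_eq_smul_one, smul_assoc, one_smul]

namespace Valuation

variable {K Γ₀ : Type*} [Field K] [LinearOrderedCommGroupWithZero Γ₀] (v : Valuation K Γ₀)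

lemma mem_smul_integer_iff {a b : K} : a ∈ b • (v.integer : Set K) ↔ v a ≤ v b := by
  rcases eq_or_ne b 0 with rfl | hb
  · rw [Set.zero_smul_set ⟨1, v.integer.one_mem⟩, Set.mem_zero, map_zero, le_zero_iff, v.zero_iff]
  rw [Set.mem_smul_set_iff_inv_smul_mem₀ hb, smul_eq_mul, SetLike.mem_coe, mem_integer_iff,
    map_mul, map_inv₀, inv_mul_le_iff₀ (v.pos_iff.2 hb), mul_one]

lemma smul_integer_subset_iff {a b : K} :
    a • (v.integer : Set K) ⊆ b • (v.integer : Set K) ↔ v a ≤ v b := by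
  refine ⟨fun h ↦ v.mem_smul_integer_iff.1 (h ⟨1, one_mem _, mul_one a⟩), ?_⟩
  rintro hab _ ⟨o, ho, rfl⟩
  rw [mem_smul_integer_iff]
  show v (a * o) ≤ v b
  rw [map_mul]
  exact mul_le_of_le_of_le_one hab ho

lemma smul_integer_eq_iff {a b : K} :
    a • (v.integer : Set K) = b • (v.integer : Set K) ↔ v a = v b := by
  rw [subset_antisymm_iff, smul_integer_subset_iff, smul_integer_subset_iff, le_antisymm_iff]

lemma smul_integer_ssubset_iff {a b : K} :
    a • (v.integer : Set K) ⊂ b • (v.integer : Set K) ↔ v a < v b := by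
  rw [ssubset_iff_subset_not_subset, smul_integer_subset_iff, smul_integer_subset_iff, not_le,
    and_iff_right_of_imp le_of_lt]

lemma exists_coe_eq_smul_integer {R : Type*} [CommRing R] [Algebra R K]
    (hR : ∀ r, v (algebraMap R K r) ≤ 1) {L : Submodule R K} (hfg : L.FG) (hL : L ≠ ⊥)
    (hstab : ∀ a ∈ v.integer, ∀ y ∈ L, a * y ∈ L) :
    ∃ x : K, x ≠ 0 ∧ (L : Set K) = x • (v.integer : Set K) := by
  obtain ⟨s, rfl⟩ := hfg
  have hs : s.Nonempty := Finset.nonempty_iff_ne_empty.2 (by rintro rfl; simp at hL)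
  obtain ⟨x, hxs, hmax⟩ := s.exists_max_image v hs
  have hx : x ≠ 0 := by
    rintro rfl
    exact hL (Submodule.span_eq_bot.2 fun y hy ↦ v.zero_iff.1 (by simpa using hmax y hy))
  refine ⟨x, hx, Set.Subset.antisymm (fun z hz ↦ v.mem_smul_integer_iff.2 ?_) ?_⟩
  · induction hz using Submodule.span_induction with
    | mem y hy => exact hmax y hy
    | zero => simp
    | add y z _ _ hy hz => exact (v.map_add y z).trans (max_le hy hz)
    | smul r y _ hy =>
      rw [Algebra.smul_def, map_mul]
      exact mul_le_of_le_one_of_le (hR r) hy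
  · rintro _ ⟨o, ho, rfl⟩
    show x * o ∈ _
    rw [mul_comm]
    exact hstab o ho x (Submodule.subset_span hxs)

end Valuation

lemma WithZero.eq_exp_neg_one_mul_of_lt_of_lt {γ δ : ℤᵐ⁰} (h₁ : exp (-2) * γ < δ) (h₂ : δ < γ) :
    δ = exp (-1) * γ := by
  lift γ to ℤ using ne_bot_of_gt h₂
  lift δ to ℤ using ne_bot_of_gt h₁
  rw [← exp_add, exp_lt_exp] at h₁
  rw [exp_lt_exp] at h₂
  rw [← exp_add, exp_inj]
  omega

section Lattice

variable {F E}
omit [CompleteSpace F]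

lemma Homothetic.symm {L L' : Submodule (OF F) E} (h : Homothetic F E L L') :
    Homothetic F E L' L := by
  obtain ⟨c, hc, hLL'⟩ := h
  exact ⟨c⁻¹, inv_ne_zero hc, by rw [hLL', inv_smul_smul₀ hc]⟩

lemma mult_eq_of_coe_eq_smul {c : E} (hc : c ≠ 0) {L L' : Submodule (OF F) E}
    (h : (L' : Set E) = c • (L : Set E)) : mult F E L' = mult F E L := by
  have hmem : ∀ y, c * y ∈ L' ↔ y ∈ L := fun y ↦ by
    rw [← SetLike.mem_coe, h, ← smul_eq_mul, Set.smul_mem_smul_set_iff₀ hc, SetLike.mem_coe]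
  ext z
  refine ⟨fun hz y hy ↦ ?_, fun hz y hy ↦ ?_⟩
  · rw [← hmem, mul_left_comm]
    exact hz _ ((hmem y).2 hy)
  · rw [← SetLike.mem_coe, h] at hy
    obtain ⟨y, hy, rfl⟩ := hy
    show z * (c * y) ∈ L'
    rw [mul_left_comm, hmem]
    exact hz y hy

lemma IsLattice.of_coe_eq_smul {c : E} (hc : c ≠ 0) {L L' : Submodule (OF F) E}
    (h : (L' : Set E) = c • (L : Set E)) (hL : IsLattice F E L) : IsLattice F E L' := by
  refine ⟨?_, ?_⟩
  · have : L' = L.map (LinearMap.mulLeft (OF F) c) :=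
      SetLike.coe_injective (by rw [Submodule.map_coe]; exact h)
    exact this ▸ hL.1.map _
  · have : (L' : Set E) = LinearMap.mulLeft F c '' L := h
    rw [this, Submodule.span_image, hL.2, Submodule.map_top, LinearMap.range_eq_top]
    exact fun z ↦ ⟨c⁻¹ * z, mul_inv_cancel_left₀ hc z⟩

lemma IsLattice.ne_bot {L : Submodule (OF F) E} (hL : IsLattice F E L) : L ≠ ⊥ := by
  rintro rfl
  simpa using hL.2

lemma ordSet_zero (π : OF F) : ordSet F E π 0 = (integralClosure (OF F) E : Set E) := by
  ext z
  refine ⟨?_, fun hz ↦ ⟨0, ⟨z, hz⟩, by simp⟩⟩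
  rintro ⟨a, b, rfl⟩
  simpa using add_mem ((integralClosure (OF F) E).algebraMap_mem a) b.2

lemma mul_mem_mult_of_smul_subset {M M' : Submodule (OF F) E} {c o : E} (ho : o ∈ mult F E M)
    (hM : c • (M : Set E) ⊆ M') (hM' : M' ≤ M) : c * o ∈ mult F E M' := fun y hy ↦ by
  rw [mul_assoc]
  exact hM ⟨o * y, ho y (hM' hy), rfl⟩

variable {Γ₀ : Type*} [LinearOrderedCommGroupWithZero Γ₀] (v : Valuation E Γ₀)

lemma homothetic_iff_of_coe_eq_smul_integer {a b : E}
    {L L' : Submodule (OF F) E} (hLa : (L : Set E) = a • (v.integer : Set E))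
    (hL'b : (L' : Set E) = b • (v.integer : Set E)) :
    Homothetic F E L L' ↔ ∃ c : F, c ≠ 0 ∧ v b = v (algebraMap F E c) * v a := by
  refine exists_congr fun c ↦ and_congr_right fun hc ↦ ?_
  rw [hLa, hL'b, Set.smul_set_eq_algebraMap_smul_set (R := F), smul_smul,
    v.smul_integer_eq_iff, map_mul]

lemma Adjacent.exists_valuation_lt {π : OF F} {a b : E}
    {L L' : Submodule (OF F) E} (hLa : (L : Set E) = a • (v.integer : Set E))
    (hL'b : (L' : Set E) = b • (v.integer : Set E)) (h : Adjacent F E π L L') :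
    ∃ c : F, c ≠ 0 ∧ v (algebraMap F E π) * (v (algebraMap F E c) * v a) < v b ∧
      v b < v (algebraMap F E c) * v a := by
  obtain ⟨-, M, M', ⟨c, hc, hM⟩, ⟨d, hd, hM'⟩, h₁, h₂⟩ := h
  rw [← map_ne_zero (algebraMap F E)] at hc hd
  simp only [hM, hM', hLa, hL'b, Set.smul_set_eq_algebraMap_smul_set (R := F), smul_smul,
    v.smul_integer_ssubset_iff, map_mul] at h₁ h₂
  have hvd : 0 < v (algebraMap F E d) := v.pos_iff.2 hd
  refine ⟨c / d, by simpa using div_ne_zero hc hd, ?_, ?_⟩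
  · rw [map_div₀, map_div₀, div_mul_eq_mul_div, mul_div_assoc', div_lt_iff₀ hvd, mul_comm (v b)]
    simpa only [mul_assoc] using h₁
  · rw [map_div₀, map_div₀, div_mul_eq_mul_div, lt_div_iff₀ hvd, mul_comm]
    exact h₂

end Lattice

section Ramified

variable {F E} [IsDiscreteValuationRing (integralClosure (OF F) E)]
  [IsFractionRing (integralClosure (OF F) E) E]
omit [CompleteSpace F]

local notation "𝒪" => integralClosure (OF F) E
local notation "v_E" =>
  IsDedekindDomain.HeightOneSpectrum.valuation E (IsDiscreteValuationRing.maximalIdeal 𝒪)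

lemma coe_integralClosure_eq_integer : (𝒪 : Set E) = (v_E).integer := by
  have := congrArg ((↑) : Subring E → Set E)
    (IsDiscreteValuationRing.map_algebraMap_eq_valuationSubring (A := 𝒪) (K := E))
  simp only [Subring.coe_map, Subring.coe_top, Set.image_univ] at this
  exact Subtype.range_coe.symm.trans this

lemma valuation_integralClosure_le_one (o : 𝒪) : v_E (o : E) ≤ 1 :=
  IsDedekindDomain.HeightOneSpectrum.valuation_le_one _ o

lemma valuation_integralClosure_of_isUnit {o : 𝒪} (ho : IsUnit o) : v_E (o : E) = 1 :=
  Valuation.Integers.one_of_isUnit' ho valuation_integralClosure_le_one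

variable {π : OF F} {πE : integralClosure (OF F) E}

lemma valuation_integralClosure_of_irreducible (hπE : Irreducible πE) :
    v_E (πE : E) = exp (-1) := by
  rw [show (πE : E) = algebraMap _ E πE from rfl,
    IsDedekindDomain.HeightOneSpectrum.valuation_of_algebraMap]
  exact IsDedekindDomain.HeightOneSpectrum.intValuation_singleton _ hπE.ne_zero hπE.maximalIdeal_eq

lemma valuation_algebraMap_uniformizer (hπE : Irreducible πE)
    (hram : Associated (πE ^ 2) (algebraMap (OF F) 𝒪 π)) :
    v_E (algebraMap F E π) = exp (-2) := by
  obtain ⟨u, hu⟩ := hram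
  rw [show algebraMap F E π = ((πE ^ 2 * u : 𝒪) : E) by rw [hu]; rfl, Subalgebra.coe_mul,
    Subalgebra.coe_pow, map_mul, map_pow, valuation_integralClosure_of_irreducible hπE,
    valuation_integralClosure_of_isUnit u.isUnit, mul_one, ← exp_nsmul]
  rfl

lemma exists_valuation_algebraMap_eq_exp_neg_two_mul [IsDiscreteValuationRing (OF F)]
    (hπ : Irreducible π) (hπE : Irreducible πE)
    (hram : Associated (πE ^ 2) (algebraMap (OF F) 𝒪 π)) {a : OF F} (ha : a ≠ 0) :
    ∃ n : ℕ, v_E (algebraMap F E a) = exp (-(2 * n : ℤ)) := by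
  obtain ⟨n, u, rfl⟩ := IsDiscreteValuationRing.eq_unit_mul_pow_irreducible ha hπ
  have hu : v_E (algebraMap F E (u : OF F)) = 1 :=
    valuation_integralClosure_of_isUnit (u.isUnit.map (algebraMap (OF F) 𝒪))
  refine ⟨n, ?_⟩
  rw [Subring.coe_mul, Subring.coe_pow, map_mul, map_pow, map_mul, map_pow, hu, one_mul,
    valuation_algebraMap_uniformizer hπE hram, ← exp_nsmul]
  congr 1
  ring

lemma valuation_algebraMap_ne_exp_odd [IsDiscreteValuationRing (OF F)]
    (hπ : Irreducible π) (hπE : Irreducible πE)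
    (hram : Associated (πE ^ 2) (algebraMap (OF F) 𝒪 π)) (c : F) (k : ℤ) :
    v_E (algebraMap F E c) ≠ exp (2 * k + 1) := by
  rcases eq_or_ne c 0 with rfl | hc
  · simp
  rcases (OF F).mem_or_inv_mem c with hmem | hmem
  · obtain ⟨n, hn⟩ := exists_valuation_algebraMap_eq_exp_neg_two_mul hπ hπE hram (a := ⟨c, hmem⟩)
      (by simpa [← Subtype.coe_inj] using hc)
    rw [show c = ((⟨c, hmem⟩ : OF F) : F) from rfl, hn, Ne, exp_inj]
    omega
  · obtain ⟨n, hn⟩ := exists_valuation_algebraMap_eq_exp_neg_two_mul hπ hπE hram (a := ⟨c⁻¹, hmem⟩)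
      (by simpa [← Subtype.coe_inj] using hc)
    rw [show c = (((⟨c⁻¹, hmem⟩ : OF F) : F))⁻¹ by simp, map_inv₀, map_inv₀, hn, ← exp_neg, Ne,
      exp_inj]
    omega

lemma exists_coe_eq_smul_integer_of_isLattice {L : Submodule (OF F) E} (hL : IsLattice F E L)
    (hstab : (𝒪 : Set E) ⊆ mult F E L) :
    ∃ x : E, x ≠ 0 ∧ (L : Set E) = x • ((v_E).integer : Set E) :=
  (v_E).exists_coe_eq_smul_integer (fun r ↦ valuation_integralClosure_le_one (algebraMap _ 𝒪 r))
    hL.1 hL.ne_bot fun _ ha ↦ hstab ((coe_integralClosure_eq_integer (F := F) (E := E)).symm ▸ ha)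

lemma algebraMap_mul_uniformizer_notMem_ordSet [IsDiscreteValuationRing (OF F)]
    (hπ : Irreducible π) (hπE : Irreducible πE)
    (hram : Associated (πE ^ 2) (algebraMap (OF F) 𝒪 π)) {m : ℕ} (hm : 2 ≤ m) :
    algebraMap F E π * πE ∉ ordSet F E π m := by
  rintro ⟨a, b, hab⟩
  have hπv := valuation_algebraMap_uniformizer hπE hram
  have hlt : v_E (algebraMap F E π ^ m * b) < v_E (algebraMap F E π * πE) := by
    rw [map_mul, map_pow, map_mul, hπv, valuation_integralClosure_of_irreducible hπE,
      ← exp_nsmul, ← exp_add]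
    calc _ ≤ exp (m • (-2 : ℤ)) := mul_le_of_le_one_right' (valuation_integralClosure_le_one b)
      _ < exp (-2 + -1) := exp_lt_exp.2 (by simp; omega)
  refine valuation_algebraMap_ne_exp_odd hπ hπE hram a (-2) ?_
  rw [show algebraMap F E a = algebraMap F E π * πE - algebraMap F E π ^ m * b from
      eq_sub_of_add_eq hab.symm, Valuation.map_sub_eq_of_lt_left _ hlt, map_mul, hπv,
    valuation_integralClosure_of_irreducible hπE, ← exp_add]
  norm_num

lemma adjacent_of_coe_eq_uniformizer_smul [IsDiscreteValuationRing (OF F)]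
    (hπ : Irreducible π) (hπE : Irreducible πE)
    (hram : Associated (πE ^ 2) (algebraMap (OF F) 𝒪 π)) {x : E} (hx : x ≠ 0)
    {L L' : Submodule (OF F) E} (hLx : (L : Set E) = x • ((v_E).integer : Set E))
    (hL' : (L' : Set E) = (πE : E) • (L : Set E)) : Adjacent F E π L L' := by
  have hL'x : (L' : Set E) = ((πE : E) * x) • ((v_E).integer : Set E) := by
    rw [hL', hLx, smul_smul]
  have hvx : 0 < v_E x := (v_E).pos_iff.2 hx
  refine ⟨fun h ↦ ?_, L, L', ⟨1, one_ne_zero, (one_smul _ _).symm⟩,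
    ⟨1, one_ne_zero, (one_smul _ _).symm⟩, ?_, ?_⟩
  · obtain ⟨c, -, hc⟩ := (homothetic_iff_of_coe_eq_smul_integer _ hLx hL'x).1 h
    rw [map_mul, mul_left_inj' hvx.ne', valuation_integralClosure_of_irreducible hπE] at hc
    exact valuation_algebraMap_ne_exp_odd hπ hπE hram c (-1) (by rw [← hc]; norm_num)
  · rw [hLx, smul_smul, hL'x, Valuation.smul_integer_ssubset_iff, map_mul, map_mul,
      valuation_algebraMap_uniformizer hπE hram, valuation_integralClosure_of_irreducible hπE]
    exact mul_lt_mul_of_pos_right (exp_lt_exp.2 (by norm_num)) hvx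
  · rw [hL'x, hLx, Valuation.smul_integer_ssubset_iff, map_mul,
      valuation_integralClosure_of_irreducible hπE]
    exact mul_lt_of_lt_one_left hvx (by rw [← exp_zero, exp_lt_exp]; norm_num)

lemma Adjacent.homothetic_of_mult_eq_ordSet_zero (hπE : Irreducible πE)
    (hram : Associated (πE ^ 2) (algebraMap (OF F) 𝒪 π)) {x : E}
    {L L' L'' : Submodule (OF F) E} (hLx : (L : Set E) = x • ((v_E).integer : Set E))
    (hL' : (L' : Set E) = (πE : E) • (L : Set E)) (hL'' : IsLattice F E L'')
    (hadj : Adjacent F E π L L'') (hm0 : mult F E L'' = ordSet F E π 0) :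
    Homothetic F E L' L'' := by
  obtain ⟨z, -, hLz⟩ := exists_coe_eq_smul_integer_of_isLattice hL'' (by rw [hm0, ordSet_zero])
  obtain ⟨c, hc, h₁, h₂⟩ := hadj.exists_valuation_lt _ hLx hLz
  rw [valuation_algebraMap_uniformizer hπE hram] at h₁
  refine (homothetic_iff_of_coe_eq_smul_integer _ (by rw [hL', hLx, smul_smul]) hLz).2
    ⟨c, hc, ?_⟩
  rw [WithZero.eq_exp_neg_one_mul_of_lt_of_lt h₁ h₂, map_mul,
    valuation_integralClosure_of_irreducible hπE, mul_left_comm]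

lemma Adjacent.mult_ne_ordSet [IsDiscreteValuationRing (OF F)] (hπ : Irreducible π)
    (hπE : Irreducible πE) (hram : Associated (πE ^ 2) (algebraMap (OF F) 𝒪 π))
    {L L'' : Submodule (OF F) E} (hL0 : mult F E L = ordSet F E π 0)
    (hadj : Adjacent F E π L L'') {m : ℕ} (hm : 2 ≤ m) : mult F E L'' ≠ ordSet F E π m := by
  obtain ⟨-, M, M', ⟨c, hc, hM⟩, ⟨d, hd, hM'⟩, h₁, h₂⟩ := hadj
  rw [Set.smul_set_eq_algebraMap_smul_set (R := F)] at hM hM'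
  have hπE_mem : (πE : E) ∈ mult F E M := by
    rw [mult_eq_of_coe_eq_smul ((map_ne_zero _).2 hc) hM, hL0, ordSet_zero]
    exact πE.2
  have := mul_mem_mult_of_smul_subset hπE_mem h₁.subset h₂.subset
  rw [mult_eq_of_coe_eq_smul ((map_ne_zero _).2 hd) hM'] at this
  exact fun h ↦ algebraMap_mul_uniformizer_notMem_ordSet hπ hπE hram hm (h ▸ this)

end Ramified

theorem adjacent_classes_ramified_case
    [IsDiscreteValuationRing (OF F)]
    [IsDiscreteValuationRing (integralClosure (OF F) E)]
    (π : OF F) (hπ : Irreducible π)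
    (hquad : Module.finrank F E = 2)
    (πE : integralClosure (OF F) E) (hπE : Irreducible πE)
    (hram : Associated (πE ^ 2) (algebraMap (OF F) (integralClosure (OF F) E) π))
    (L : Submodule (OF F) E) (hL : IsLattice F E L)
    (hL0 : mult F E L = ordSet F E π 0) :
    ∃ L' : Submodule (OF F) E, IsLattice F E L' ∧
      (L' : Set E) = (πE : E) • (L : Set E) ∧
      Adjacent F E π L L' ∧
      mult F E L' = ordSet F E π 0 ∧
      (∀ L'' : Submodule (OF F) E, IsLattice F E L'' → Adjacent F E π L L'' →
          mult F E L'' = ordSet F E π 0 → Homothetic F E L' L'') ∧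
      (∀ L'' : Submodule (OF F) E, IsLattice F E L'' → Adjacent F E π L L'' →
          ¬ Homothetic F E L'' L' →
          ∀ m : ℕ, mult F E L'' = ordSet F E π m → m = 1) := by
  have : FiniteDimensional F E := .of_finrank_eq_succ hquad
  have : IsFractionRing (integralClosure (OF F) E) E :=
    integralClosure.isFractionRing_of_finite_extension F E
  obtain ⟨x, hx, hLx⟩ := exists_coe_eq_smul_integer_of_isLattice hL (by rw [hL0, ordSet_zero])
  let L' := L.map (LinearMap.mulLeft (OF F) (πE : E))
  have hL' : (L' : Set E) = (πE : E) • (L : Set E) := Submodule.map_coe _ _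
  have hπE0 : (πE : E) ≠ 0 := by simpa using hπE.ne_zero
  have huniq (L'' : Submodule (OF F) E) (hL'' : IsLattice F E L'') (hadj : Adjacent F E π L L'')
      (hm0 : mult F E L'' = ordSet F E π 0) : Homothetic F E L' L'' :=
    hadj.homothetic_of_mult_eq_ordSet_zero hπE hram hLx hL' hL'' hm0
  refine ⟨L', hL.of_coe_eq_smul hπE0 hL', hL',
    adjacent_of_coe_eq_uniformizer_smul hπ hπE hram hx hLx hL',
    (mult_eq_of_coe_eq_smul hπE0 hL').trans hL0, huniq, fun L'' hL'' hadj hnot m hm ↦ ?_⟩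
  match m with
  | 0 => exact absurd (huniq L'' hL'' hadj hm).symm hnot
  | 1 => rfl
  | m + 2 => exact absurd hm (hadj.mult_ne_ordSet hπ hπE hram hL0 (by omega))
end
end

section
/- Let N be an abelian group. For a locally constant compactly supported function f: F → N, the extension f̄ of f to the one-point compactification OnePoint F = F ∪ {∞} defined by f̄(∞) = 0 is locally constant. Moreover, the map sending f to the class of f̄ modulo constant functions is a group isomorphism from C_c⁰(F, N) onto LocallyConstant(OnePoint F, N)/{constant functions}. -/
/-!
`F` is a nonarchimedean local field: a field complete with respect to a discrete valuation
(encoded by `Valued F ℤₘ₀`, `CompleteSpace F`, the valuation ring being a DVR) with finite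
residue field. `N` is an abelian group. `C_c⁰(F, N)` is encoded by the predicates
`IsLocallyConstant` and `HasCompactSupport`. `OnePoint F = F ∪ {∞}` is the one-point
compactification of `F`.
-/

open scoped Multiplicative

noncomputable section

variable (F : Type*) [Field F] [Valued F (WithZero (Multiplicative ℤ))] [CompleteSpace F]

variable (N : Type*) [AddCommGroup N]

/-- The extension `f̄` of `f : F → N` to the one-point compactification, with `f̄(∞) = 0`. -/
def fbar (f : F → N) : OnePoint F → N := fun x => Option.elim x 0 f

/-!
A fibre of `f̄` avoiding `0` is a fibre of `f`, hence open; one containing `0` is open near `∞`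
because its complement is a closed subset of the compact set `tsupport f`. Conversely, for a
locally constant `h` on `OnePoint F` the fibre of `h(∞)` is an open neighbourhood of `∞`, so
its complement is compact and `h - h(∞)` restricts to a compactly supported function on `F`.
Evaluating at `∞` forces the constant in `f̄ = ḡ + c` to vanish.
-/

open OnePoint

namespace OnePoint

variable {X M : Type*}

def extendByZero [Zero M] (f : X → M) : OnePoint X → M := fun x => x.elim 0 f

@[simp]
theorem extendByZero_infty [Zero M] (f : X → M) : extendByZero f ∞ = 0 := rfl

@[simp]
theorem extendByZero_coe [Zero M] (f : X → M) (x : X) : extendByZero f x = f x := rfl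

theorem extendByZero_add [AddZeroClass M] (f g : X → M) :
    extendByZero (f + g) = extendByZero f + extendByZero g := by
  funext x
  induction x using OnePoint.rec <;> simp

theorem exists_extendByZero_eq_add_const_iff [AddZeroClass M] {f g : X → M} :
    (∃ c : M, ∀ x, extendByZero f x = extendByZero g x + c) ↔ f = g := by
  constructor
  · rintro ⟨c, hc⟩
    have hc0 : c = 0 := by simpa using (hc ∞).symm
    funext x
    simpa [hc0] using hc x
  · rintro rfl
    exact ⟨0, fun x => (add_zero _).symm⟩

theorem eq_extendByZero_sub_infty_add [AddGroup M] (h : OnePoint X → M) (x : OnePoint X) :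
    h x = extendByZero (fun y : X => h y - h ∞) x + h ∞ := by
  induction x using OnePoint.rec <;> simp

variable [TopologicalSpace X]

theorem _root_.IsLocallyConstant.extendByZero [Zero M] {f : X → M} (hf : IsLocallyConstant f)
    (hsupp : HasCompactSupport f) : IsLocallyConstant (OnePoint.extendByZero f) := by
  intro s
  have hpre : ((↑) : X → OnePoint X) ⁻¹' (OnePoint.extendByZero f ⁻¹' s) = f ⁻¹' s := rfl
  refine isOpen_def.2 ⟨fun h0 => ?_, hpre ▸ hf s⟩
  rw [hpre]
  refine hsupp.of_isClosed_subset (hf s).isClosed_compl fun x hx => subset_tsupport f ?_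
  exact fun hfx => hx (by simpa [Set.mem_preimage, hfx] using h0)

theorem _root_.IsLocallyConstant.hasCompactSupport_sub_infty [AddGroup M] {h : OnePoint X → M}
    (hh : IsLocallyConstant h) : HasCompactSupport fun x : X => h x - h ∞ := by
  obtain ⟨hclosed, hcompact⟩ := (isOpen_iff_of_mem (s := h ⁻¹' {h ∞}) rfl).1 (hh.isOpen_fiber _)
  refine HasCompactSupport.intro' hcompact hclosed fun x hx => ?_
  simpa [sub_eq_zero] using hx

end OnePoint

theorem fbar_locallyConstant_and_iso_onto_steinberg :
    (∀ f : F → N, IsLocallyConstant f → HasCompactSupport f →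
        IsLocallyConstant (fbar F N f)) ∧
    (∀ f g : F → N, fbar F N (f + g) = fbar F N f + fbar F N g) ∧
    (∀ f g : F → N, IsLocallyConstant f → HasCompactSupport f →
        IsLocallyConstant g → HasCompactSupport g →
        ((∃ c : N, ∀ x : OnePoint F, fbar F N f x = fbar F N g x + c) ↔ f = g)) ∧
    (∀ h : OnePoint F → N, IsLocallyConstant h →
        ∃ f : F → N, IsLocallyConstant f ∧ HasCompactSupport f ∧
          ∃ c : N, ∀ x : OnePoint F, h x = fbar F N f x + c) := by
  have hfbar : fbar F N = extendByZero := rfl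
  rw [hfbar]
  refine ⟨fun f hf hsupp => hf.extendByZero hsupp, extendByZero_add,
    fun f g _ _ _ _ => exists_extendByZero_eq_add_const_iff, fun h hh => ?_⟩
  exact ⟨_, (hh.comp_continuous continuous_coe).sub (.const _), hh.hasCompactSupport_sub_infty,
    h ∞, eq_extendByZero_sub_infty_add h⟩
end
end

section
/- For every x ∈ F^*, the function z(x): F → A is locally constant with compact support. Moreover, the cocycle identity z(x₁·x₂)(y) = z(x₂)(x₁⁻¹·y) + z(x₁)(y) holds for all x₁, x₂ ∈ F^* and all y ∈ F; that is, x ↦ z(x) is a 1-cocycle of F^* with values in the compactly supported locally constant A-valued functions on F, where F^* acts by (x·f)(y) = f(x⁻¹·y). -/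
/-!
`F` is a nonarchimedean local field: a field complete with respect to a discrete valuation
(encoded by `Valued F ℤₘ₀`, `CompleteSpace F`, the valuation ring `O` being a DVR) with
finite residue field. `A` is an abelian group and `l : F^* → A` is a locally constant group
homomorphism; `l̃ : F → A` extends `l` by `l̃(0) = 0`. For `x ∈ F^*` the function
`z(x) : F → A` is `z(x)(y) = [y ∈ x·O]·l(x) + ([y ∈ O] − [y ∈ x·O])·l̃(y)`.
-/

open scoped Multiplicative Pointwise

noncomputable section

variable (F : Type*) [Field F] [Valued F (WithZero (Multiplicative ℤ))] [CompleteSpace F]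

variable (A : Type*) [AddCommGroup A]

open Classical in
/-- `l̃ : F → A`: the extension of `l : F^* → A` by `l̃(0) = 0`. -/
def lhat (l : Fˣ → A) : F → A :=
  fun y => if h : y = 0 then 0 else l (Units.mk0 y h)

open Classical in
/-- The cocycle `z(x)(y) = [y ∈ x·O]·l(x) + ([y ∈ O] − [y ∈ x·O])·l̃(y)`. -/
def zcoc (l : Fˣ → A) (x : Fˣ) (y : F) : A :=
  (if y ∈ (x : F) • ((OF F : ValuationSubring F) : Set F) then l x else 0) +
    ((if y ∈ ((OF F : ValuationSubring F) : Set F) then lhat F A l y else 0) -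
      (if y ∈ (x : F) • ((OF F : ValuationSubring F) : Set F) then lhat F A l y else 0))

/-!
Near `0` both indicator conditions hold, the two `l̃`-terms cancel and `z(x)` is the constant
`l(x)` on the open set `O ∩ x•O`. Away from `0`, the sets `O` and `x•O` are clopen and `l̃` is
locally constant because `Fˣ` is open in `F`. Off the compact set `O ∪ x•O` (a complete DVR with
finite residue field is compact) `z(x)` vanishes. For the cocycle identity write `y = x₁v`: then
`y ∈ x₁O ↔ v ∈ O`, `y ∈ x₁x₂O ↔ v ∈ x₂O` and `l̃(y) = l(x₁) + l̃(v)`, and what remains is a check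
over the possible memberships.
-/

open Topology Filter
open scoped WithZero

theorem IsClopen.eventually_mem_iff {X : Type*} [TopologicalSpace X] {s : Set X}
    (hs : IsClopen s) (x : X) : ∀ᶠ y in 𝓝 x, (y ∈ s ↔ x ∈ s) := by
  by_cases hx : x ∈ s
  · filter_upwards [hs.isOpen.mem_nhds hx] with y hy using iff_of_true hy hx
  · filter_upwards [hs.compl.isOpen.mem_nhds hx] with y hy using iff_of_false hy hx

section Lhat

variable {K : Type*} [Field K] {A}

theorem lhat_units (l : Kˣ → A) (u : Kˣ) : lhat K A l u = l u := by
  simp [lhat]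

theorem eventually_lhat_eq [TopologicalSpace K] [IsOpenUnits K] {l : Kˣ → A}
    (hl : IsLocallyConstant l) (u : Kˣ) : ∀ᶠ y in 𝓝 (u : K), lhat K A l y = l u := by
  rw [← IsOpenUnits.isOpenEmbedding_unitsVal.map_nhds_eq, eventually_map]
  filter_upwards [hl.eventually_eq u] with v hv
  rw [lhat_units, hv]

end Lhat

section ValuationSubring

variable {K : Type*} [Field K] [Valued K ℤᵐ⁰]

theorem isClopen_OF : IsClopen ((OF K : ValuationSubring K) : Set K) :=
  Valued.isClopen_integer K

theorem isClopen_smul_OF (x : Kˣ) : IsClopen ((x : K) • ((OF K : ValuationSubring K) : Set K)) :=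
  ⟨isClopen_OF.isClosed.smul₀ (x : K), isClopen_OF.isOpen.smul₀ x.ne_zero⟩

/- Mathlib's compactness criterion for `𝒪[K]` is stated for rank-one valuations; a valuation
into `ℤᵐ⁰` whose ring of integers is a DVR is one. -/
theorem isCompact_OF [CompleteSpace K] [IsDiscreteValuationRing (OF K)]
    [Finite (IsLocalRing.ResidueField (OF K))] : IsCompact ((OF K : ValuationSubring K) : Set K) := by
  have : (Valued.v : Valuation K ℤᵐ⁰).IsNontrivial :=
    Valued.v.isNontrivial_iff_not_a_field.mpr (IsDiscreteValuationRing.not_a_field (OF K))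
  let := Valuation.IsRankOneDiscrete.rankOne (Valued.v : Valuation K ℤᵐ⁰) one_lt_two
  have : CompleteSpace (Valued.integer K) := (Valued.isClosed_integer K).completeSpace_coe
  exact isCompact_iff_compactSpace.mpr <|
    Valued.integer.compactSpace_iff_completeSpace_and_isDiscreteValuationRing_and_finite_residueField.mpr
      ⟨this, ‹_›, ‹_›⟩

end ValuationSubring

section Cocycle

variable {K : Type*} [Field K] [Valued K ℤᵐ⁰] {A} (l : Kˣ → A) (x : Kˣ) {y : K}

theorem zcoc_apply_of_mem (hy : y ∈ ((OF K : ValuationSubring K) : Set K))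
    (hxy : y ∈ (x : K) • ((OF K : ValuationSubring K) : Set K)) : zcoc K A l x y = l x := by
  simp [zcoc, hy, hxy]

theorem zcoc_apply_of_notMem (hy : y ∉ ((OF K : ValuationSubring K) : Set K))
    (hxy : y ∉ (x : K) • ((OF K : ValuationSubring K) : Set K)) : zcoc K A l x y = 0 := by
  simp [zcoc, hy, hxy]

theorem zcoc_apply_zero : zcoc K A l x 0 = l x :=
  zcoc_apply_of_mem l x (zero_mem _) (Set.zero_mem_smul_set (zero_mem (OF K)))

theorem isLocallyConstant_zcoc {l : Kˣ → A} (hl : IsLocallyConstant l) :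
    IsLocallyConstant (zcoc K A l x) := by
  refine (IsLocallyConstant.iff_eventually_eq _).mpr fun y => ?_
  obtain rfl | hy := eq_or_ne y 0
  · filter_upwards [isClopen_OF.isOpen.mem_nhds (zero_mem (OF K)),
      (isClopen_smul_OF x).isOpen.mem_nhds (Set.zero_mem_smul_set (zero_mem (OF K)))]
      with z hz hxz
    rw [zcoc_apply_of_mem l x hz hxz, zcoc_apply_zero]
  · obtain ⟨u, rfl⟩ := hy.isUnit
    filter_upwards [isClopen_OF.eventually_mem_iff (u : K),
      (isClopen_smul_OF x).eventually_mem_iff (u : K), eventually_lhat_eq hl u] with z hz hxz hlz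
    unfold zcoc
    rw [hz, hxz, hlz, lhat_units]

theorem hasCompactSupport_zcoc [CompleteSpace K] [IsDiscreteValuationRing (OF K)]
    [Finite (IsLocalRing.ResidueField (OF K))] : HasCompactSupport (zcoc K A l x) :=
  HasCompactSupport.intro (isCompact_OF.union (isCompact_OF.smul (x : K))) fun _ hy =>
    zcoc_apply_of_notMem l x (fun h => hy (Or.inl h)) (fun h => hy (Or.inr h))

theorem zcoc_mul_apply {l : Kˣ → A} (hlhom : ∀ u v : Kˣ, l (u * v) = l u + l v) (x₁ x₂ : Kˣ)
    (y : K) : zcoc K A l (x₁ * x₂) y = zcoc K A l x₂ (((x₁⁻¹ : Kˣ) : K) * y) + zcoc K A l x₁ y := by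
  obtain rfl | hy := eq_or_ne y 0
  · rw [mul_zero, zcoc_apply_zero, zcoc_apply_zero, zcoc_apply_zero, hlhom, add_comm]
  obtain ⟨v, rfl⟩ : ∃ v : Kˣ, y = ↑(x₁ * v) := ⟨x₁⁻¹ * Units.mk0 y hy, by simp⟩
  have hv : ((x₁⁻¹ : Kˣ) : K) * ↑(x₁ * v) = v := by rw [← Units.val_mul, inv_mul_cancel_left]
  have hO : ((x₁ * v : Kˣ) : K) ∈ (x₁ : K) • ((OF K : ValuationSubring K) : Set K) ↔
      (v : K) ∈ ((OF K : ValuationSubring K) : Set K) := by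
    rw [Units.val_mul, ← smul_eq_mul, Set.smul_mem_smul_set_iff₀ x₁.ne_zero]
  have hxO : ((x₁ * v : Kˣ) : K) ∈ ((x₁ * x₂ : Kˣ) : K) • ((OF K : ValuationSubring K) : Set K) ↔
      (v : K) ∈ (x₂ : K) • ((OF K : ValuationSubring K) : Set K) := by
    rw [Units.val_mul, Units.val_mul, mul_smul, ← smul_eq_mul,
      Set.smul_mem_smul_set_iff₀ x₁.ne_zero]
  unfold zcoc
  rw [hv, hO, hxO, lhat_units, lhat_units, hlhom, hlhom]
  split_ifs <;> abel

end Cocycle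

/-- For every `x ∈ F^*` the function `z(x) : F → A` is locally constant
with compact support, and `x ↦ z(x)` is a `1`-cocycle of `F^*` on the compactly supported
locally constant `A`-valued functions on `F` (with `F^*` acting by `(x·f)(y) = f(x⁻¹·y)`):
`z(x₁·x₂)(y) = z(x₂)(x₁⁻¹·y) + z(x₁)(y)`. -/
theorem zcoc_locallyConstant_compactSupport_and_cocycle
    [IsDiscreteValuationRing (OF F)] [Finite (IsLocalRing.ResidueField (OF F))]
    (l : Fˣ → A) (hl : IsLocallyConstant l)
    (hlhom : ∀ u v : Fˣ, l (u * v) = l u + l v) :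
    (∀ x : Fˣ, IsLocallyConstant (zcoc F A l x) ∧ HasCompactSupport (zcoc F A l x)) ∧
    (∀ x₁ x₂ : Fˣ, ∀ y : F,
        zcoc F A l (x₁ * x₂) y = zcoc F A l x₂ (((x₁⁻¹ : Fˣ) : F) * y) + zcoc F A l x₁ y) :=
  ⟨fun x => ⟨isLocallyConstant_zcoc x hl, hasCompactSupport_zcoc l x⟩, zcoc_mul_apply hlhom⟩
end
end
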